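/- Under the Gaussian mixture assumptions (M2') and (M3') with constant α, the posterior intensity of Theorem (Bayesian theorem for persistence diagrams) given diagrams D_{Y^1},...,D_{Y^m} is again a Gaussian mixture: λ_{D_X|D_{Y^{1:m}}}(x) = (1−α)λ_{D_X}(x) + (α/m) Σ_{i=1}^m Σ_{y ∈ D_{Y^i}} Σ_{j=1}^N C_j^y 𝒩*(x; μ_j^y, σ_j^y I), where μ_j^y = (σ_j^X y + σ^Y μ_j^X)/(σ_j^X + σ^Y), σ_j^y = σ^Y σ_j^X/(σ_j^X + σ^Y), w_j^y = c_j^X 𝒩(y; μ_j^X, (σ^Y + σ_j^X)I), Q_j^y = ∫_W 𝒩(u; μ_j^y, σ_j^y I) du, and C_j^y = w_j^y / (λ_{D_{Y_S}}(y) + α Σ_{j'} w_{j'}^y Q_{j'}^y). -/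

import Mathlib

open MeasureTheory
open scoped Real

/-- The bivariate isotropic Gaussian density `𝒩(z; m, σI) = (2πσ)⁻¹ exp(−|z−m|²/(2σ))`. -/
noncomputable def gauss2 (σ : ℝ) (m z : EuclideanSpace ℝ (Fin 2)) : ℝ :=
  (2 * π * σ)⁻¹ * Real.exp (-‖z - m‖ ^ 2 / (2 * σ))

/-- The restricted Gaussian density `𝒩*(z; m, σI) = 𝒩(z; m, σI) 𝟙_W(z)`. -/
noncomputable def nstar (W : Set (EuclideanSpace ℝ (Fin 2)))
    (σ : ℝ) (m z : EuclideanSpace ℝ (Fin 2)) : ℝ :=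
  W.indicator (fun _ => (1 : ℝ)) z * gauss2 σ m z

lemma norm_identity (a b : ℝ) (hab : a + b ≠ 0) (μ y x : EuclideanSpace ℝ (Fin 2)) :
    b * (a + b) * ‖y - x‖ ^ 2 + a * (a + b) * ‖x - μ‖ ^ 2 =
      a * b * ‖y - μ‖ ^ 2 + (a + b) ^ 2 * ‖x - (b + a)⁻¹ • (b • y + a • μ)‖ ^ 2 := by
  have key : (a + b) • (x - (b + a)⁻¹ • (b • y + a • μ)) = a • (x - μ) - b • (y - x) := by
    rw [smul_sub, smul_smul, add_comm a b, mul_inv_cancel₀ (by rwa [add_comm b a]), one_smul]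
    module
  have h1 : (a + b) ^ 2 * ‖x - (b + a)⁻¹ • (b • y + a • μ)‖ ^ 2
      = ‖a • (x - μ) - b • (y - x)‖ ^ 2 := by
    rw [← key, norm_smul, mul_pow, Real.norm_eq_abs, sq_abs]
  have h2 : (y : EuclideanSpace ℝ (Fin 2)) - μ = (y - x) + (x - μ) := by abel
  have h3 : ‖a • (x - μ) - b • (y - x)‖ ^ 2
      = a ^ 2 * ‖x - μ‖ ^ 2 - 2 * (a * b * inner ℝ (x - μ) (y - x)) + b ^ 2 * ‖y - x‖ ^ 2 := by
    rw [@norm_sub_sq_real, norm_smul, norm_smul, real_inner_smul_left, real_inner_smul_right]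
    simp only [Real.norm_eq_abs, mul_pow, sq_abs]
    ring
  have h4 : ‖(y : EuclideanSpace ℝ (Fin 2)) - μ‖ ^ 2
      = ‖y - x‖ ^ 2 + 2 * inner ℝ (y - x) (x - μ) + ‖x - μ‖ ^ 2 := by
    rw [h2, @norm_add_sq_real]
  rw [h1, h3, h4, real_inner_comm]
  ring

lemma gauss_prod (a b : ℝ) (ha : 0 < a) (hb : 0 < b) (μ y x : EuclideanSpace ℝ (Fin 2)) :
    gauss2 a x y * gauss2 b μ x =
      gauss2 (a + b) μ y * gauss2 (a * b / (b + a)) ((b + a)⁻¹ • (b • y + a • μ)) x := by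
  have hab : (0:ℝ) < a + b := by linarith
  have hba : (0:ℝ) < b + a := by linarith
  unfold gauss2
  rw [mul_mul_mul_comm, ← Real.exp_add, mul_mul_mul_comm, ← Real.exp_add]
  have hpre : (2 * π * a)⁻¹ * (2 * π * b)⁻¹
      = (2 * π * (a + b))⁻¹ * (2 * π * (a * b / (b + a)))⁻¹ := by
    have hπ : (0:ℝ) < π := Real.pi_pos
    field_simp
    ring
  have hexp : -‖y - x‖ ^ 2 / (2 * a) + -‖x - μ‖ ^ 2 / (2 * b)
      = -‖y - μ‖ ^ 2 / (2 * (a + b)) +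
        -‖x - (b + a)⁻¹ • (b • y + a • μ)‖ ^ 2 / (2 * (a * b / (b + a))) := by
    have hid := norm_identity a b hab.ne' μ y x
    set n1 := ‖y - x‖ ^ 2
    set n2 := ‖x - μ‖ ^ 2
    set n3 := ‖y - μ‖ ^ 2
    set n4 := ‖x - (b + a)⁻¹ • (b • y + a • μ)‖ ^ 2
    field_simp
    linear_combination (-1 : ℝ) * hid
  rw [hpre, hexp]

lemma integrable_gauss2 {σ : ℝ} (hσ : 0 < σ) (m : EuclideanSpace ℝ (Fin 2)) :
    Integrable (fun z => gauss2 σ m z) := by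
  unfold gauss2
  apply Integrable.const_mul
  have hb : (0:ℝ) < (2 * σ)⁻¹ := by positivity
  have h0 : Integrable (fun v : EuclideanSpace ℝ (Fin 2) =>
      Real.exp (-(2 * σ)⁻¹ * ‖v‖ ^ 2)) := by
    have h := GaussianFourier.integrable_cexp_neg_mul_sq_norm_add
      (V := EuclideanSpace ℝ (Fin 2)) (b := ((2 * σ)⁻¹ : ℂ)) (by simpa using hb) 0 0
    have h2 := h.re
    refine h2.congr ?_
    filter_upwards with v
    simp only [zero_mul, add_zero]
    rw [show (-(2 * (σ:ℂ))⁻¹ * (‖v‖:ℂ) ^ 2) = ((-(2 * σ)⁻¹ * ‖v‖ ^ 2 : ℝ) : ℂ) by push_cast; ring,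
      ← Complex.ofReal_exp]
    exact Complex.ofReal_re _
  have h1 := h0.comp_sub_right m
  refine h1.congr ?_
  filter_upwards with z
  congr 1
  field_simp

/-- **Conjugacy of Gaussian mixture intensities (Proposition 3.2).**
Under (M2′)–(M3′) with constant `α`: prior intensity
`λX(x) = Σ_j c_j 𝒩*(x; μX_j, σX_j I)` on the wedge `W`, likelihood kernel
`ℓ(y|x) = 𝒩*(y; x, σY I)`, clutter intensity `λS(y) = Σ_k cS_k 𝒩*(y; μS_k, σS_k I)`,
and observed diagrams `D_{Y^1},…,D_{Y^m}` with points in `W`, the posterior intensity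
of the Bayesian theorem for persistence diagrams,
`(1−α) λX(x) + (α/m) Σ_i Σ_{y∈D_{Y^i}} ℓ(y|x) λX(x) / (λS(y) + α ∫_W ℓ(y|u) λX(u) du)`,
is again a Gaussian mixture
`(1−α) λX(x) + (α/m) Σ_i Σ_{y∈D_{Y^i}} Σ_j C_j^y 𝒩*(x; μ_j^y, σ_j^y I)`, with
`μ_j^y = (σX_j y + σY μX_j)/(σX_j + σY)`, `σ_j^y = σY σX_j/(σX_j + σY)`,
`w_j^y = c_j 𝒩(y; μX_j, (σY + σX_j) I)`, `Q_j^y = ∫_W 𝒩(u; μ_j^y, σ_j^y I) du`, and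
`C_j^y = w_j^y / (λS(y) + α Σ_{j'} w_{j'}^y Q_{j'}^y)`. -/
theorem gaussian_mixture_posterior
    (W : Set (EuclideanSpace ℝ (Fin 2))) (hW : MeasurableSet W)
    (N M m : ℕ) (hm : 0 < m)
    (c σX : Fin N → ℝ) (μX : Fin N → EuclideanSpace ℝ (Fin 2))
    (hc : ∀ j, 0 < c j) (hσX : ∀ j, 0 < σX j)
    (σY : ℝ) (hσY : 0 < σY)
    (cS σS : Fin M → ℝ) (μS : Fin M → EuclideanSpace ℝ (Fin 2))
    (hcS : ∀ k, 0 < cS k) (hσS : ∀ k, 0 < σS k)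
    (α : ℝ) (hα : 0 ≤ α ∧ α ≤ 1)
    (D : Fin m → Finset (EuclideanSpace ℝ (Fin 2)))
    (hD : ∀ i, ∀ y ∈ D i, y ∈ W) :
    ∀ x : EuclideanSpace ℝ (Fin 2),
      (1 - α) * (∑ j, c j * nstar W (σX j) (μX j) x) +
        (α / m) * ∑ i, ∑ y ∈ D i,
          (nstar W σY x y * (∑ j, c j * nstar W (σX j) (μX j) x)) /
            ((∑ k, cS k * nstar W (σS k) (μS k) y) +
              α * ∫ u in W, nstar W σY u y * (∑ j, c j * nstar W (σX j) (μX j) u))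
      = (1 - α) * (∑ j, c j * nstar W (σX j) (μX j) x) +
        (α / m) * ∑ i, ∑ y ∈ D i, ∑ j,
          ((c j * gauss2 (σY + σX j) (μX j) y) /
              ((∑ k, cS k * nstar W (σS k) (μS k) y) +
                α * ∑ j', (c j' * gauss2 (σY + σX j') (μX j') y) *
                  ∫ u in W, gauss2 (σY * σX j' / (σX j' + σY))
                    ((σX j' + σY)⁻¹ • (σX j' • y + σY • μX j')) u)) *
            nstar W (σY * σX j / (σX j + σY))
              ((σX j + σY)⁻¹ • (σX j • y + σY • μX j)) x := by
  intro x
  congr 1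
  congr 1
  refine Finset.sum_congr rfl fun i _ => ?_
  refine Finset.sum_congr rfl fun y hy => ?_
  have hyW : y ∈ W := hD i y hy
  have hind_y : W.indicator (fun _ => (1:ℝ)) y = 1 := Set.indicator_of_mem hyW _
  -- Step A: numerator identity
  have hA : ∀ z : EuclideanSpace ℝ (Fin 2),
      nstar W σY z y * ∑ j, c j * nstar W (σX j) (μX j) z
      = ∑ j, (c j * gauss2 (σY + σX j) (μX j) y) *
          nstar W (σY * σX j / (σX j + σY))
            ((σX j + σY)⁻¹ • (σX j • y + σY • μX j)) z := by
    intro z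
    unfold nstar
    rw [hind_y, one_mul, Finset.mul_sum]
    refine Finset.sum_congr rfl fun j _ => ?_
    have hg := gauss_prod σY (σX j) hσY (hσX j) (μX j) y z
    linear_combination (c j * W.indicator (fun _ => (1:ℝ)) z) * hg
  -- Step B: integral identity
  have hB : (∫ u in W, nstar W σY u y * ∑ j, c j * nstar W (σX j) (μX j) u)
      = ∑ j', (c j' * gauss2 (σY + σX j') (μX j') y) *
          ∫ u in W, gauss2 (σY * σX j' / (σX j' + σY))
            ((σX j' + σY)⁻¹ • (σX j' • y + σY • μX j')) u := by
    rw [setIntegral_congr_fun hW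
      (g := fun u => ∑ j, (c j * gauss2 (σY + σX j) (μX j) y) *
        gauss2 (σY * σX j / (σX j + σY))
          ((σX j + σY)⁻¹ • (σX j • y + σY • μX j)) u)
      (fun u hu => by
        simp only [nstar, hind_y, Set.indicator_of_mem hu, one_mul, Finset.mul_sum]
        refine Finset.sum_congr rfl fun j _ => ?_
        have hg := gauss_prod σY (σX j) hσY (hσX j) (μX j) y u
        linear_combination (c j) * hg)]
    rw [integral_finset_sum _ fun j _ =>
      (((integrable_gauss2 (div_pos (mul_pos hσY (hσX j)) (by linarith [hσX j, hσY])) _).const_mul _).integrableOn)]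
    exact Finset.sum_congr rfl fun j _ => integral_const_mul _ _
  rw [hA x, hB]
  rw [Finset.sum_div]
  exact Finset.sum_congr rfl fun j _ => (div_mul_eq_mul_div _ _ _).symm
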